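/- Let 𝒮 be a non-empty finite set, μ_s ∈ P_{2,ac}(ℝ^d) for s ∈ 𝒮, and weights w_s ≥ 0 summing to 1. Let λ ∈ P_{2,ac}(ℝ^d), Z ∼ λ, and S independent of Z with P(S=s) = w_s. Then for every f: ℝ^d × 𝒮 → ℝ^d with f(·, s) ∈ B(λ, μ_s) for all s, and h(z) := Σ_s w_s f(z, s), the Wasserstein barycenter functional satisfies Σ_s w_s W_2^2(h_#λ, μ_s) ≤ Σ_{i=1}^d E[Var(f_i(Z,S) | Z)]. -/

import Mathlib

/-!
For each `s`, pushing `lam` forward along `z ↦ (h z, f z s)` couples `h_# lam` with `μ s`, so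
`W₂²(h_# lam, μ s) ≤ ∫ ‖h - f(·, s)‖² d lam`. Since `S` is independent of `Z ∼ lam` with law `w`,
the `w`-average of these bounds is `E ‖f(Z, S) - h(Z)‖²`, the sum of the coordinatewise errors.
-/

open MeasureTheory ENNReal ProbabilityTheory

/-- `g` is a `(μ,ν)`-inverse of `f`: `g ∘ f = id` μ-a.s. and `f ∘ g = id` ν-a.s. -/
def IsInvOf {d : ℕ} (μ ν : Measure (EuclideanSpace ℝ (Fin d)))
    (f g : EuclideanSpace ℝ (Fin d) → EuclideanSpace ℝ (Fin d)) : Prop :=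
  (∀ᵐ x ∂μ, g (f x) = x) ∧ (∀ᵐ y ∂ν, f (g y) = y)

/-- `f ∈ B(μ, ν)`: `f` is Borel, pushes `μ` to `ν` and admits a `(μ,ν)`-inverse. -/
def MemB {d : ℕ} (μ ν : Measure (EuclideanSpace ℝ (Fin d)))
    (f : EuclideanSpace ℝ (Fin d) → EuclideanSpace ℝ (Fin d)) : Prop :=
  Measurable f ∧ μ.map f = ν ∧ ∃ g, Measurable g ∧ IsInvOf μ ν f g

/-- `W_p^p(μ, ν)`: the Kantorovich optimal transport cost for the cost `‖x - y‖^p`. -/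
noncomputable def Wpp {d : ℕ} (p : ℝ) (μ ν : Measure (EuclideanSpace ℝ (Fin d))) : ℝ≥0∞ :=
  ⨅ (γ : Measure (EuclideanSpace ℝ (Fin d) × EuclideanSpace ℝ (Fin d)))
    (_ : γ.map Prod.fst = μ) (_ : γ.map Prod.snd = ν),
    ∫⁻ q, (‖q.1 - q.2‖₊ : ℝ≥0∞) ^ p ∂γ

lemma Wpp_map_le_lintegral {d : ℕ} (p : ℝ) {α : Type*} [MeasurableSpace α] (ρ : Measure α)
    {g₁ g₂ : α → EuclideanSpace ℝ (Fin d)} (hg₁ : Measurable g₁) (hg₂ : Measurable g₂) :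
    Wpp p (ρ.map g₁) (ρ.map g₂) ≤ ∫⁻ x, (‖g₁ x - g₂ x‖₊ : ℝ≥0∞) ^ p ∂ρ := by
  have hg : Measurable fun x => (g₁ x, g₂ x) := hg₁.prodMk hg₂
  refine iInf_le_of_le (ρ.map fun x => (g₁ x, g₂ x)) <| iInf_le_of_le ?_ <| iInf_le_of_le ?_ ?_
  · rw [Measure.map_map measurable_fst hg]; rfl
  · rw [Measure.map_map measurable_snd hg]; rfl
  · rw [lintegral_map (by fun_prop) hg]

lemma EuclideanSpace.nnnorm_rpow_two_eq_sum {ι : Type*} [Fintype ι] (x : EuclideanSpace ℝ ι) :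
    (‖x‖₊ : ℝ≥0∞) ^ (2 : ℝ) = ∑ i, ENNReal.ofReal (x i ^ 2) := by
  rw [← ENNReal.ofReal_sum_of_nonneg fun i _ => sq_nonneg _, ← EuclideanSpace.real_norm_sq_eq,
    ENNReal.ofReal_pow (norm_nonneg x), ofReal_norm, ENNReal.rpow_two, enorm_eq_nnnorm]

lemma ProbabilityTheory.IndepFun.lintegral_comp_eq_tsum {Ω β ι : Type*} [MeasurableSpace Ω]
    {P : Measure Ω} [IsFiniteMeasure P] [MeasurableSpace β] [Countable ι] [MeasurableSpace ι]
    [MeasurableSingletonClass ι] {Z : Ω → β} {S : Ω → ι} (hZ : Measurable Z) (hS : Measurable S)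
    (hind : IndepFun Z S P) {G : β → ι → ℝ≥0∞} (hG : ∀ s, Measurable (G · s)) :
    ∫⁻ ω, G (Z ω) (S ω) ∂P = ∑' s, P {ω | S ω = s} * ∫⁻ z, G z s ∂(P.map Z) := by
  have hGm : Measurable fun q : β × ι => G q.1 q.2 := measurable_from_prod_countable_left hG
  have hlaw : P.map (fun ω => (Z ω, S ω)) = (P.map Z).prod (P.map S) :=
    (indepFun_iff_map_prod_eq_prod_map_map hZ.aemeasurable hS.aemeasurable).mp hind
  calc ∫⁻ ω, G (Z ω) (S ω) ∂P
      = ∫⁻ q, G q.1 q.2 ∂((P.map Z).prod (P.map S)) := by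
        rw [← hlaw, lintegral_map hGm (hZ.prodMk hS)]
    _ = ∫⁻ z, ∑' s, G z s * P {ω | S ω = s} ∂(P.map Z) := by
        rw [lintegral_prod _ hGm.aemeasurable]
        refine lintegral_congr fun z => ?_
        rw [lintegral_countable']
        simp only [Measure.map_apply hS (measurableSet_singleton _)]
        rfl
    _ = ∑' s, P {ω | S ω = s} * ∫⁻ z, G z s ∂(P.map Z) := by
        rw [lintegral_tsum fun s => ((hG s).mul_const _).aemeasurable]
        simp only [lintegral_mul_const _ (hG _), mul_comm]

theorem stmt11_general {d : ℕ} {Ω : Type*} [MeasurableSpace Ω] (P : Measure Ω)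
    [IsProbabilityMeasure P]
    {𝒮 : Type*} [Fintype 𝒮] [MeasurableSpace 𝒮] [MeasurableSingletonClass 𝒮]
    (μ : 𝒮 → Measure (EuclideanSpace ℝ (Fin d)))
    (w : 𝒮 → ℝ)
    (lam : Measure (EuclideanSpace ℝ (Fin d)))
    (Z : Ω → EuclideanSpace ℝ (Fin d)) (S : Ω → 𝒮)
    (hZ : Measurable Z) (hS : Measurable S) (hZlaw : P.map Z = lam)
    (hindep : IndepFun Z S P)
    (hSlaw : ∀ s, P {ω | S ω = s} = ENNReal.ofReal (w s))
    (f : EuclideanSpace ℝ (Fin d) → 𝒮 → EuclideanSpace ℝ (Fin d))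
    (hf : ∀ s, MemB lam (μ s) fun z => f z s)
    (h : EuclideanSpace ℝ (Fin d) → EuclideanSpace ℝ (Fin d))
    (hh : h = fun z => ∑ s, w s • f z s) :
    ∑ s, ENNReal.ofReal (w s) * Wpp 2 (lam.map h) (μ s)
      ≤ ∑ i : Fin d, ∫⁻ ω, ENNReal.ofReal ((f (Z ω) (S ω) i - h (Z ω) i) ^ 2) ∂P := by
  have hfm : ∀ s, Measurable fun z => f z s := fun s => (hf s).1
  have hhm : Measurable h := hh ▸ Finset.measurable_sum _ fun s _ => (hfm s).const_smul (w s)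
  have hcoord : ∀ i, ∫⁻ ω, ENNReal.ofReal ((f (Z ω) (S ω) i - h (Z ω) i) ^ 2) ∂P
      = ∑ s, ENNReal.ofReal (w s) * ∫⁻ z, ENNReal.ofReal ((f z s i - h z i) ^ 2) ∂lam := by
    intro i
    rw [hindep.lintegral_comp_eq_tsum hZ hS
      (G := fun z s => ENNReal.ofReal ((f z s i - h z i) ^ 2)) (fun s => by fun_prop),
      tsum_fintype, hZlaw]
    simp only [hSlaw]
  calc ∑ s, ENNReal.ofReal (w s) * Wpp 2 (lam.map h) (μ s)
      ≤ ∑ s, ENNReal.ofReal (w s) * ∫⁻ z, (‖f z s - h z‖₊ : ℝ≥0∞) ^ (2 : ℝ) ∂lam := by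
        gcongr with s
        rw [← (hf s).2.1]
        exact (Wpp_map_le_lintegral 2 lam hhm (hfm s)).trans_eq
          (lintegral_congr fun z => by rw [← nnnorm_neg, neg_sub])
    _ = ∑ s, ENNReal.ofReal (w s) * ∑ i, ∫⁻ z, ENNReal.ofReal ((f z s i - h z i) ^ 2) ∂lam := by
        refine Finset.sum_congr rfl fun s _ => ?_
        simp only [EuclideanSpace.nnnorm_rpow_two_eq_sum, PiLp.sub_apply]
        rw [lintegral_finsetSum _ fun i _ => by fun_prop]
    _ = _ := by
        simp_rw [hcoord, Finset.mul_sum]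
        exact Finset.sum_comm

theorem stmt11 {d : ℕ} {Ω : Type*} [MeasurableSpace Ω] (P : Measure Ω)
    [IsProbabilityMeasure P]
    {𝒮 : Type*} [Fintype 𝒮] [Nonempty 𝒮] [MeasurableSpace 𝒮] [MeasurableSingletonClass 𝒮]
    (μ : 𝒮 → Measure (EuclideanSpace ℝ (Fin d)))
    (hμprob : ∀ s, IsProbabilityMeasure (μ s))
    (hμac : ∀ s, μ s ≪ (volume : Measure (EuclideanSpace ℝ (Fin d))))
    (hμm : ∀ s, ∫⁻ x, (‖x‖₊ : ℝ≥0∞) ^ (2 : ℝ) ∂(μ s) < ⊤)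
    (w : 𝒮 → ℝ) (hw0 : ∀ s, 0 ≤ w s) (hw1 : ∑ s, w s = 1)
    (lam : Measure (EuclideanSpace ℝ (Fin d))) [IsProbabilityMeasure lam]
    (hlac : lam ≪ (volume : Measure (EuclideanSpace ℝ (Fin d))))
    (hlm : ∫⁻ z, (‖z‖₊ : ℝ≥0∞) ^ (2 : ℝ) ∂lam < ⊤)
    (Z : Ω → EuclideanSpace ℝ (Fin d)) (S : Ω → 𝒮)
    (hZ : Measurable Z) (hS : Measurable S) (hZlaw : P.map Z = lam)
    (hindep : IndepFun Z S P)
    (hSlaw : ∀ s, P {ω | S ω = s} = ENNReal.ofReal (w s))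
    (f : EuclideanSpace ℝ (Fin d) → 𝒮 → EuclideanSpace ℝ (Fin d))
    (hf : ∀ s, MemB lam (μ s) fun z => f z s)
    (h : EuclideanSpace ℝ (Fin d) → EuclideanSpace ℝ (Fin d))
    (hh : h = fun z => ∑ s, w s • f z s) :
    ∑ s, ENNReal.ofReal (w s) * Wpp 2 (lam.map h) (μ s)
      ≤ ∑ i : Fin d, ∫⁻ ω, ENNReal.ofReal ((f (Z ω) (S ω) i - h (Z ω) i) ^ 2) ∂P :=
  stmt11_general P μ w lam Z S hZ hS hZlaw hindep hSlaw f hf h hh
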